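/- Let u : ℝ × ℝ³ → ℝ³ and p : ℝ × ℝ³ → ℝ be smooth, with u(t,·) divergence-free and Schwartz-class for every t, satisfying the incompressible Euler equation ∂u/∂t = −(u·∇)u − ∇p. Let g : ℝ × ℝ³ → ℝ³ be smooth with ∂g/∂t(t,x) = u(t, g(t,x)) and g(0,x) = x, and assume g(t,·) is a diffeomorphism of ℝ³ for every t. Then the vorticity is transported along the flow (Cauchy vorticity formula): (curl u(t,·))(g(t,x)) = Dg(t,x) · (curl u(0,·))(x) for all t and x. -/

import Mathlib

open MeasureTheory Matrix

noncomputable section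

/-- Vector fields on ℝ³ modeled as functions `Fin 3 → ℝ`. -/
abbrev V3 := Fin 3 → ℝ

/-- Partial derivative `∂ᵢ f` of a scalar function. -/
noncomputable def pd (i : Fin 3) (f : V3 → ℝ) (x : V3) : ℝ :=
  fderiv ℝ f x (Pi.single i 1)

/-- Curl of a vector field on ℝ³. -/
noncomputable def vcurl (v : V3 → V3) (x : V3) : V3 :=
  ![pd 1 (fun y => v y 2) x - pd 2 (fun y => v y 1) x,
    pd 2 (fun y => v y 0) x - pd 0 (fun y => v y 2) x,
    pd 0 (fun y => v y 1) x - pd 1 (fun y => v y 0) x]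

/-- Divergence of a vector field on ℝ³. -/
noncomputable def vdiv (v : V3 → V3) (x : V3) : ℝ :=
  pd 0 (fun y => v y 0) x + pd 1 (fun y => v y 1) x + pd 2 (fun y => v y 2) x

/-- Jacobian matrix `Dg(x)` of a map `g : ℝ³ → ℝ³`, `(jac g x) i j = ∂ⱼ gⁱ (x)`. -/
noncomputable def jac (g : V3 → V3) (x : V3) : Matrix (Fin 3) (Fin 3) ℝ :=
  fun i j => pd j (fun y => g y i) x

/-- Euclidean inner product on ℝ³. -/
def dot (a b : V3) : ℝ := ∑ i, a i * b i

/-- Helicity of a vector field. -/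
noncomputable def Hel (v : V3 → V3) : ℝ := ∫ x : V3, dot (v x) (vcurl v x)

/-- Gradient of a scalar function on ℝ³. -/
noncomputable def grad (f : V3 → ℝ) (x : V3) : V3 := fun i => pd i f x

/-- Directional derivative `(X·∇)Y`. -/
noncomputable def covD (X Y : V3 → V3) (x : V3) : V3 :=
  fun i => ∑ j, X x j * pd j (fun y => Y y i) x

/-- The operator `(∇ᵀX)Y`, with i-th component `Σ_j (∂_i X^j) Y^j`. -/
noncomputable def gradT (X Y : V3 → V3) (x : V3) : V3 :=
  fun i => ∑ j, pd i (fun y => X y j) x * Y x j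

/-- Componentwise Laplacian of a vector field. -/
noncomputable def lapl (v : V3 → V3) (x : V3) : V3 :=
  fun i => ∑ j, pd j (fun y => pd j (fun z => v z i) y) x

/-- Time derivative `∂u/∂t` of a time-dependent vector field. -/
noncomputable def dtv (u : ℝ → V3 → V3) (t : ℝ) (x : V3) : V3 :=
  fun i => deriv (fun s => u s x i) t
lemma clm_apply_eq_sum (L : V3 →L[ℝ] ℝ) (w : V3) : L w = ∑ m, w m * L (Pi.single m 1) := by
  have hw : w = ∑ m, (w m) • (Pi.single m 1 : V3) := by
    funext j
    simp [Finset.sum_apply, Pi.single_apply, Finset.sum_ite_eq']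
  conv_lhs => rw [hw]
  simp [smul_eq_mul]

-- vector decomposition in ℝ × V3

lemma prod_decomp (c : ℝ) (w : V3) :
    ((c, w) : ℝ × V3) = c • ((1:ℝ), (0:V3)) + ∑ m, (w m) • (((0:ℝ), Pi.single m 1) : ℝ × V3) := by
  have hw : w = ∑ m, (w m) • (Pi.single m 1 : V3) := by
    funext j
    simp [Finset.sum_apply, Pi.single_apply, Finset.sum_ite_eq']
  ext
  · simp [Prod.fst_sum]
  · simpa [Prod.snd_sum] using congrFun hw _

-- chain rule along a curve

lemma chain_curve {F : ℝ × V3 → ℝ} (hF : ContDiff ℝ (⊤ : ℕ∞) F) {γ : ℝ → ℝ × V3} {c : ℝ × V3} {s : ℝ}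
    (hγ : HasDerivAt γ c s) :
    HasDerivAt (fun τ => F (γ τ)) (fderiv ℝ F (γ s) c) s :=
  (hF.differentiable (by simp) _).hasFDerivAt.comp_hasDerivAt s hγ

-- slice conversion for pd

lemma pd_slice {F : ℝ × V3 → ℝ} (hF : ContDiff ℝ (⊤ : ℕ∞) F) (s : ℝ) (x : V3) (k : Fin 3) :
    pd k (fun y => F (s, y)) x = fderiv ℝ F (s, x) ((0:ℝ), Pi.single k 1) := by
  have h : HasFDerivAt (fun y => F (s, y))
      ((fderiv ℝ F (s, x)).comp (ContinuousLinearMap.inr ℝ ℝ V3)) x :=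
    (hF.differentiable (by simp) _).hasFDerivAt.comp x (hasFDerivAt_prodMk_right s x)
  rw [pd, h.fderiv]
  rfl

lemma contDiff_slice {F : ℝ × V3 → ℝ} (hF : ContDiff ℝ (⊤ : ℕ∞) F) (s : ℝ) :
    ContDiff ℝ (⊤ : ℕ∞) (fun y => F (s, y)) :=
  hF.comp (contDiff_const.prodMk contDiff_id)

lemma d2_curve {F : ℝ × V3 → ℝ} (hF : ContDiff ℝ (⊤ : ℕ∞) F) {γ : ℝ → ℝ × V3} {c : ℝ × V3} {s : ℝ}
    (hγ : HasDerivAt γ c s) (w : ℝ × V3) :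
    HasDerivAt (fun τ => fderiv ℝ F (γ τ) w) (fderiv ℝ (fderiv ℝ F) (γ s) c w) s := by
  have hD : ContDiff ℝ (⊤ : ℕ∞) (fderiv ℝ F) := hF.fderiv_right (by simp)
  have h1 : HasFDerivAt (fderiv ℝ F) (fderiv ℝ (fderiv ℝ F) (γ s)) (γ s) :=
    (hD.differentiable (by simp) _).hasFDerivAt
  exact ((ContinuousLinearMap.apply ℝ ℝ w).hasFDerivAt.comp _ h1).comp_hasDerivAt s hγ

lemma fderiv2_symm {F : ℝ × V3 → ℝ} (hF : ContDiff ℝ (⊤ : ℕ∞) F) (q v w : ℝ × V3) :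
    fderiv ℝ (fderiv ℝ F) q v w = fderiv ℝ (fderiv ℝ F) q w v :=
  (hF.contDiffAt.isSymmSndFDerivAt (by rw [minSmoothness_of_isRCLikeNormedField]; exact WithTop.coe_le_coe.mpr le_top)) v w

lemma pd_fderiv_eval {F : ℝ × V3 → ℝ} (hF : ContDiff ℝ (⊤ : ℕ∞) F) (s : ℝ) (x : V3) (k : Fin 3)
    (w : ℝ × V3) :
    pd k (fun y => fderiv ℝ F (s, y) w) x
      = fderiv ℝ (fderiv ℝ F) (s, x) ((0:ℝ), Pi.single k 1) w := by
  have hD : ContDiff ℝ (⊤ : ℕ∞) (fderiv ℝ F) := hF.fderiv_right (by simp)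
  have hDw : ContDiff ℝ (⊤ : ℕ∞) (fun q => fderiv ℝ F q w) :=
    (ContinuousLinearMap.apply ℝ ℝ w).contDiff.comp hD
  rw [pd_slice hDw s x k]
  have h1 : HasFDerivAt (fun q => fderiv ℝ F q w)
      ((ContinuousLinearMap.apply ℝ ℝ w).comp (fderiv ℝ (fderiv ℝ F) (s, x))) (s, x) :=
    (ContinuousLinearMap.apply ℝ ℝ w).hasFDerivAt.comp _ ((hD.differentiable (by simp) _).hasFDerivAt)
  rw [h1.fderiv]
  rfl

lemma pd_comp (k : Fin 3) (x : V3) {v : V3 → ℝ} {h : V3 → V3}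
    (hv : DifferentiableAt ℝ v (h x)) (hh : DifferentiableAt ℝ h x) :
    pd k (fun y => v (h y)) x = ∑ m, pd m v (h x) * pd k (fun y => h y m) x := by
  have hc : HasFDerivAt (fun y => v (h y))
      ((fderiv ℝ v (h x)).comp (fderiv ℝ h x)) x :=
    hv.hasFDerivAt.comp x hh.hasFDerivAt
  have hm : ∀ m : Fin 3, pd k (fun y => h y m) x = (fderiv ℝ h x) (Pi.single k 1) m := by
    intro m
    have h1 := (ContinuousLinearMap.proj (R := ℝ) (φ := fun _ : Fin 3 => ℝ)
      m).hasFDerivAt.comp x hh.hasFDerivAt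
    have h2 : fderiv ℝ (fun y => h y m) x
        = (ContinuousLinearMap.proj m).comp (fderiv ℝ h x) := h1.fderiv
    rw [pd, h2]; rfl
  rw [pd, hc.fderiv, ContinuousLinearMap.comp_apply,
    clm_apply_eq_sum (fderiv ℝ v (h x)) ((fderiv ℝ h x) (Pi.single k 1))]
  refine Finset.sum_congr rfl fun m _ => ?_
  rw [hm m, pd, mul_comm]

lemma flow_jac_deriv (u : ℝ → V3 → V3) (g : ℝ → V3 → V3)
    (hu : ContDiff ℝ (⊤ : ℕ∞) fun q : ℝ × V3 => u q.1 q.2)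
    (hg : ContDiff ℝ (⊤ : ℕ∞) fun q : ℝ × V3 => g q.1 q.2)
    (hflow : ∀ t x, HasDerivAt (fun s => g s x) (u t (g t x)) t)
    (x : V3) (i k : Fin 3) (s : ℝ) :
    HasDerivAt (fun τ => pd k (fun y => g τ y i) x)
      (∑ m, pd m (fun y => u s y i) (g s x) * pd k (fun y => g s y m) x) s := by
  have hGs : ContDiff ℝ (⊤ : ℕ∞) (fun q : ℝ × V3 => g q.1 q.2 i) := contDiff_pi.mp hg i
  set G : ℝ × V3 → ℝ := fun q => g q.1 q.2 i with hGdef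
  have key : ∀ τ, pd k (fun y => g τ y i) x = fderiv ℝ G (τ, x) ((0:ℝ), Pi.single k 1) :=
    fun τ => pd_slice hGs τ x k
  have hcurve : HasDerivAt (fun τ => ((τ, x) : ℝ × V3)) ((1:ℝ), (0:V3)) s :=
    (hasDerivAt_id s).prodMk (hasDerivAt_const s x)
  have h2 := d2_curve hGs hcurve ((0:ℝ), Pi.single k 1)
  have hval : fderiv ℝ (fderiv ℝ G) (s, x) ((1:ℝ), (0:V3)) ((0:ℝ), Pi.single k 1)
      = ∑ m, pd m (fun y => u s y i) (g s x) * pd k (fun y => g s y m) x := by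
    rw [fderiv2_symm hGs, ← pd_fderiv_eval hGs s x k ((1:ℝ), (0:V3))]
    have hval2 : (fun y => fderiv ℝ G (s, y) ((1:ℝ), (0:V3))) = fun y => u s (g s y) i := by
      funext y
      have hc : HasDerivAt (fun τ => G (τ, y)) (fderiv ℝ G (s, y) ((1:ℝ), (0:V3))) s :=
        chain_curve hGs ((hasDerivAt_id s).prodMk (hasDerivAt_const s y))
      have hf : HasDerivAt (fun τ => g τ y i) (u s (g s y) i) s :=
        hasDerivAt_pi.mp (hflow s y) i
      exact hc.unique hf
    rw [hval2]
    have hv : DifferentiableAt ℝ (fun z => u s z i) (g s x) :=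
      ((contDiff_slice (contDiff_pi.mp hu i) s).differentiable (by simp)) _
    have hh : DifferentiableAt ℝ (g s) x := by
      have : ContDiff ℝ (⊤ : ℕ∞) (g s) :=
        contDiff_pi.mpr fun m => contDiff_slice (contDiff_pi.mp hg m) s
      exact (this.differentiable (by simp)) _
    exact pd_comp k x hv hh
  simp only [key]
  exact hval ▸ h2

lemma flow_pdu_deriv (u : ℝ → V3 → V3) (g : ℝ → V3 → V3)
    (hu : ContDiff ℝ (⊤ : ℕ∞) fun q : ℝ × V3 => u q.1 q.2)
    (hflow : ∀ t x, HasDerivAt (fun s => g s x) (u t (g t x)) t)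
    (x : V3) (i k : Fin 3) (s : ℝ) :
    HasDerivAt (fun τ => pd k (fun y => u τ y i) (g τ x))
      (pd k (fun y => dtv u s y i) (g s x)
        + ∑ m, u s (g s x) m * pd k (fun y => pd m (fun z => u s z i) y) (g s x)) s := by
  have hUs : ContDiff ℝ (⊤ : ℕ∞) (fun q : ℝ × V3 => u q.1 q.2 i) := contDiff_pi.mp hu i
  set U : ℝ × V3 → ℝ := fun q => u q.1 q.2 i with hUdef
  have key : ∀ τ, pd k (fun y => u τ y i) (g τ x)
      = fderiv ℝ U (τ, g τ x) ((0:ℝ), Pi.single k 1) :=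
    fun τ => pd_slice hUs τ (g τ x) k
  have hcurve : HasDerivAt (fun τ => ((τ, g τ x) : ℝ × V3)) ((1:ℝ), u s (g s x)) s :=
    (hasDerivAt_id s).prodMk (hflow s x)
  have h2 := d2_curve hUs hcurve ((0:ℝ), Pi.single k 1)
  have hval : fderiv ℝ (fderiv ℝ U) (s, g s x) ((1:ℝ), u s (g s x)) ((0:ℝ), Pi.single k 1)
      = pd k (fun y => dtv u s y i) (g s x)
        + ∑ m, u s (g s x) m * pd k (fun y => pd m (fun z => u s z i) y) (g s x) := by
    rw [fderiv2_symm hUs]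
    have hdec := prod_decomp 1 (u s (g s x))
    rw [hdec, map_add, _root_.map_smul, map_sum, one_smul]
    congr 1
    · rw [← pd_fderiv_eval hUs s (g s x) k ((1:ℝ), (0:V3))]
      congr 1
      funext y
      have hc : HasDerivAt (fun τ => U (τ, y)) (fderiv ℝ U (s, y) ((1:ℝ), (0:V3))) s :=
        chain_curve hUs ((hasDerivAt_id s).prodMk (hasDerivAt_const s y))
      exact (hc.deriv).symm
    · refine Finset.sum_congr rfl fun m _ => ?_
      rw [_root_.map_smul, smul_eq_mul]
      congr 1
      rw [← pd_fderiv_eval hUs s (g s x) k ((0:ℝ), Pi.single m 1)]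
      congr 1
      funext y
      exact (pd_slice hUs s y m).symm
  simp only [key]
  exact hval ▸ h2

lemma contDiff_pd {f : V3 → ℝ} (hf : ContDiff ℝ (⊤ : ℕ∞) f) (j : Fin 3) :
    ContDiff ℝ (⊤ : ℕ∞) (fun y => pd j f y) :=
  (ContinuousLinearMap.apply ℝ ℝ (Pi.single j 1 : V3)).contDiff.comp (hf.fderiv_right (by simp))

lemma pd_neg_sub {f g : V3 → ℝ} {z : V3} {k : Fin 3}
    (hf : DifferentiableAt ℝ f z) (hg : DifferentiableAt ℝ g z) :
    pd k (fun y => -f y - g y) z = -pd k f z - pd k g z := by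
  rw [pd, fderiv_fun_sub (f := fun y => -f y) hf.neg hg, ContinuousLinearMap.sub_apply, fderiv_fun_neg,
    ContinuousLinearMap.neg_apply]
  rfl

lemma pd_sum {f : Fin 3 → V3 → ℝ} {z : V3} {k : Fin 3}
    (hf : ∀ j, DifferentiableAt ℝ (f j) z) :
    pd k (fun y => ∑ j, f j y) z = ∑ j, pd k (f j) z := by
  rw [pd, fderiv_fun_sum fun j _ => hf j, ContinuousLinearMap.sum_apply]
  rfl

lemma pd_mul {f g : V3 → ℝ} {z : V3} {k : Fin 3}
    (hf : DifferentiableAt ℝ f z) (hg : DifferentiableAt ℝ g z) :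
    pd k (fun y => f y * g y) z = f z * pd k g z + g z * pd k f z := by
  rw [pd, fderiv_fun_mul hf hg, ContinuousLinearMap.add_apply, ContinuousLinearMap.smul_apply,
    ContinuousLinearMap.smul_apply, smul_eq_mul, smul_eq_mul]
  rfl

lemma pd_eval_spatial {f : V3 → ℝ} (hf : ContDiff ℝ (⊤ : ℕ∞) f) (a : Fin 3) (w z : V3) :
    pd a (fun y => fderiv ℝ f y w) z = fderiv ℝ (fderiv ℝ f) z (Pi.single a 1) w := by
  have hD : ContDiff ℝ (⊤ : ℕ∞) (fderiv ℝ f) := hf.fderiv_right (by simp)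
  have h1 : HasFDerivAt (fun y => fderiv ℝ f y w)
      ((ContinuousLinearMap.apply ℝ ℝ w).comp (fderiv ℝ (fderiv ℝ f) z)) z :=
    (ContinuousLinearMap.apply ℝ ℝ w).hasFDerivAt.comp _ (hD.differentiable (by simp) _).hasFDerivAt
  rw [pd, h1.fderiv]
  rfl

lemma pd_pd_symm {f : V3 → ℝ} (hf : ContDiff ℝ (⊤ : ℕ∞) f) (a b : Fin 3) (z : V3) :
    pd a (fun y => pd b f y) z = pd b (fun y => pd a f y) z := by
  have ha : pd a (fun y => pd b f y) z
      = fderiv ℝ (fderiv ℝ f) z (Pi.single a 1) (Pi.single b 1) :=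
    pd_eval_spatial hf a (Pi.single b 1) z
  have hb : pd b (fun y => pd a f y) z
      = fderiv ℝ (fderiv ℝ f) z (Pi.single b 1) (Pi.single a 1) :=
    pd_eval_spatial hf b (Pi.single a 1) z
  have hsym := ((hf.contDiffAt (x := z)).isSymmSndFDerivAt (by rw [minSmoothness_of_isRCLikeNormedField]; exact WithTop.coe_le_coe.mpr le_top))
    (Pi.single a 1) (Pi.single b 1)
  rw [ha, hsym, hb]

lemma pd_dtv_euler (u : ℝ → V3 → V3) (p : ℝ → V3 → ℝ)
    (hu : ContDiff ℝ (⊤ : ℕ∞) fun q : ℝ × V3 => u q.1 q.2)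
    (hp : ContDiff ℝ (⊤ : ℕ∞) fun q : ℝ × V3 => p q.1 q.2)
    (heuler : ∀ t x, dtv u t x = -(covD (u t) (u t) x) - grad (p t) x)
    (s : ℝ) (k b : Fin 3) (z : V3) :
    pd k (fun y => dtv u s y b) z
      = -(∑ j, (pd k (fun y => u s y j) z * pd j (fun w => u s w b) z
          + u s z j * pd k (fun y => pd j (fun w => u s w b) y) z))
        - pd k (fun y => pd b (fun w => p s w) y) z := by
  have hcu : ∀ i : Fin 3, ContDiff ℝ (⊤ : ℕ∞) (fun y => u s y i) :=
    fun i => contDiff_slice (contDiff_pi.mp hu i) s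
  have hcp : ContDiff ℝ (⊤ : ℕ∞) (fun y => p s y) := contDiff_slice hp s
  have h1 : (fun y => dtv u s y b)
      = fun y => -(∑ j, u s y j * pd j (fun w => u s w b) y) - pd b (fun w => p s w) y := by
    funext y
    have := congrFun (heuler s y) b
    simpa [covD, grad] using this
  rw [h1]
  have hf1 : ∀ j : Fin 3, DifferentiableAt ℝ (fun y => u s y j * pd j (fun w => u s w b) y) z :=
    fun j => (((hcu j).mul (contDiff_pd (hcu b) j)).differentiable (by simp)) z
  have hsum : DifferentiableAt ℝ (fun y => ∑ j, u s y j * pd j (fun w => u s w b) y) z := by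
    apply DifferentiableAt.fun_sum
    exact fun j _ => hf1 j
  have hpd : DifferentiableAt ℝ (fun y => pd b (fun w => p s w) y) z :=
    ((contDiff_pd hcp b).differentiable (by simp)) z
  rw [pd_neg_sub hsum hpd]
  congr 2
  rw [pd_sum hf1]
  refine Finset.sum_congr rfl fun j _ => ?_
  rw [pd_mul (((hcu j).differentiable (by simp)) z) (((contDiff_pd (hcu b) j).differentiable (by simp)) z)]
  ring

lemma curl_comp_deriv (u : ℝ → V3 → V3) (p : ℝ → V3 → ℝ) (g : ℝ → V3 → V3)
    (hu : ContDiff ℝ (⊤ : ℕ∞) fun q : ℝ × V3 => u q.1 q.2)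
    (hp : ContDiff ℝ (⊤ : ℕ∞) fun q : ℝ × V3 => p q.1 q.2)
    (heuler : ∀ t x, dtv u t x = -(covD (u t) (u t) x) - grad (p t) x)
    (hflow : ∀ t x, HasDerivAt (fun s => g s x) (u t (g t x)) t)
    (x : V3) (a b : Fin 3) (s : ℝ) :
    HasDerivAt (fun τ => pd a (fun y => u τ y b) (g τ x) - pd b (fun y => u τ y a) (g τ x))
      (∑ j, (pd b (fun y => u s y j) (g s x) * pd j (fun w => u s w a) (g s x)
           - pd a (fun y => u s y j) (g s x) * pd j (fun w => u s w b) (g s x))) s := by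
  have hDa := flow_pdu_deriv u g hu hflow x b a s
  have hDb := flow_pdu_deriv u g hu hflow x a b s
  have h := hDa.sub hDb
  refine h.congr_deriv ?_
  rw [pd_dtv_euler u p hu hp heuler s a b (g s x),
      pd_dtv_euler u p hu hp heuler s b a (g s x),
      pd_pd_symm (contDiff_slice hp s) a b (g s x)]
  simp only [Fin.sum_univ_three]
  ring

lemma pdu_cont (u : ℝ → V3 → V3) (g : ℝ → V3 → V3)
    (hu : ContDiff ℝ (⊤ : ℕ∞) fun q : ℝ × V3 => u q.1 q.2)
    (hg : ContDiff ℝ (⊤ : ℕ∞) fun q : ℝ × V3 => g q.1 q.2)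
    (x : V3) (i k : Fin 3) :
    Continuous (fun τ => pd k (fun y => u τ y i) (g τ x)) := by
  have hUs : ContDiff ℝ (⊤ : ℕ∞) (fun q : ℝ × V3 => u q.1 q.2 i) := contDiff_pi.mp hu i
  have hkey : (fun τ => pd k (fun y => u τ y i) (g τ x))
      = fun τ => fderiv ℝ (fun q : ℝ × V3 => u q.1 q.2 i) (τ, g τ x) ((0:ℝ), Pi.single k 1) :=
    funext fun τ => pd_slice hUs τ (g τ x) k
  rw [hkey]
  have hcurve : Continuous fun τ => ((τ, g τ x) : ℝ × V3) := by
    refine continuous_id.prodMk ?_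
    exact hg.continuous.comp (continuous_id.prodMk continuous_const)
  have hDc : Continuous (fderiv ℝ (fun q : ℝ × V3 => u q.1 q.2 i)) :=
    ((hUs.fderiv_right (by simp)).continuous (n := (⊤ : ℕ∞)) (𝕜 := ℝ))
  exact (ContinuousLinearMap.apply ℝ ℝ (((0:ℝ), Pi.single k 1) : ℝ × V3)).continuous.comp
    (hDc.comp hcurve)

lemma mulVec_norm_le (A : Matrix (Fin 3) (Fin 3) ℝ) (d : V3) :
    ‖A.mulVec d‖ ≤ (∑ i, ∑ k, |A i k|) * ‖d‖ := by
  refine (pi_norm_le_iff_of_nonneg (by positivity)).mpr fun i => ?_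
  calc ‖(A.mulVec d) i‖ = |∑ k, A i k * d k| := rfl
    _ ≤ ∑ k, |A i k * d k| := Finset.abs_sum_le_sum_abs _ _
    _ ≤ ∑ k, |A i k| * ‖d‖ := Finset.sum_le_sum fun k _ => by
        rw [abs_mul]
        exact mul_le_mul_of_nonneg_left
          (by simpa [Real.norm_eq_abs] using norm_le_pi_norm d k) (abs_nonneg _)
    _ = (∑ k, |A i k|) * ‖d‖ := (Finset.sum_mul _ _ _).symm
    _ ≤ (∑ i, ∑ k, |A i k|) * ‖d‖ := by
        refine mul_le_mul_of_nonneg_right ?_ (norm_nonneg d)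
        exact Finset.single_le_sum (f := fun i => ∑ k, |A i k|)
          (fun j _ => by positivity) (Finset.mem_univ i)

theorem cauchy_vorticity_formula (u : ℝ → V3 → V3) (p : ℝ → V3 → ℝ)
    (hu : ContDiff ℝ (⊤ : ℕ∞) fun q : ℝ × V3 => u q.1 q.2)
    (hp : ContDiff ℝ (⊤ : ℕ∞) fun q : ℝ × V3 => p q.1 q.2)
    (hdiv : ∀ t x, vdiv (u t) x = 0)
    (hudecay : ∀ t, ∀ (k n : ℕ), ∃ C : ℝ, ∀ x : V3,
      ‖x‖ ^ k * ‖iteratedFDeriv ℝ n (u t) x‖ ≤ C)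
    (hpdecay : ∀ t, ∀ (k n : ℕ), ∃ C : ℝ, ∀ x : V3,
      ‖x‖ ^ k * ‖iteratedFDeriv ℝ n (p t) x‖ ≤ C)
    (heuler : ∀ t x, dtv u t x = -(covD (u t) (u t) x) - grad (p t) x)
    (g ginv : ℝ → V3 → V3)
    (hg : ContDiff ℝ (⊤ : ℕ∞) fun q : ℝ × V3 => g q.1 q.2)
    (hflow : ∀ t x, HasDerivAt (fun s => g s x) (u t (g t x)) t)
    (hg0 : ∀ x, g 0 x = x)
    (hginv : ∀ t, ContDiff ℝ (⊤ : ℕ∞) (ginv t))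
    (hleft : ∀ t, Function.LeftInverse (ginv t) (g t))
    (hright : ∀ t, Function.RightInverse (ginv t) (g t))
    (t : ℝ) (x : V3) :
    vcurl (u t) (g t x) = (jac (g t) x).mulVec (vcurl (u 0) x) := by
  classical
  set A : ℝ → Matrix (Fin 3) (Fin 3) ℝ := fun s i m => pd m (fun y => u s y i) (g s x)
    with hAdef
  set Y : ℝ → V3 := fun s => vcurl (u s) (g s x) with hYdef
  set Z : ℝ → V3 := fun s => (jac (g s) x).mulVec (vcurl (u 0) x) with hZdef
  show Y t = Z t
  -- derivative of Y
  have hY : ∀ s, HasDerivAt Y ((A s).mulVec (Y s)) s := by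
    intro s
    have hdiv' : pd 0 (fun y => u s y 0) (g s x) + pd 1 (fun y => u s y 1) (g s x)
        + pd 2 (fun y => u s y 2) (g s x) = 0 := by
      simpa [vdiv] using hdiv s (g s x)
    rw [hasDerivAt_pi]
    intro i
    fin_cases i
    · have hc := curl_comp_deriv u p g hu hp heuler hflow x 1 2 s
      have hfun : (fun τ => Y τ 0)
          = fun τ => pd 1 (fun y => u τ y 2) (g τ x) - pd 2 (fun y => u τ y 1) (g τ x) := by
        funext τ; simp [hYdef, vcurl]
      show HasDerivAt (fun τ => Y τ 0) ((A s *ᵥ Y s) 0) s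
      rw [hfun]
      convert hc using 1
      simp only [hYdef, hAdef, Matrix.mulVec, dotProduct, vcurl, Fin.sum_univ_three,
        Matrix.cons_val_zero, Matrix.cons_val_one, Matrix.head_cons, Matrix.cons_val_two,
        Matrix.tail_cons]
      linear_combination (pd 1 (fun y => u s y 2) (g s x)
        - pd 2 (fun y => u s y 1) (g s x)) * hdiv'
    · have hc := curl_comp_deriv u p g hu hp heuler hflow x 2 0 s
      have hfun : (fun τ => Y τ 1)
          = fun τ => pd 2 (fun y => u τ y 0) (g τ x) - pd 0 (fun y => u τ y 2) (g τ x) := by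
        funext τ; simp [hYdef, vcurl]
      show HasDerivAt (fun τ => Y τ 1) ((A s *ᵥ Y s) 1) s
      rw [hfun]
      convert hc using 1
      simp only [hYdef, hAdef, Matrix.mulVec, dotProduct, vcurl, Fin.sum_univ_three,
        Matrix.cons_val_zero, Matrix.cons_val_one, Matrix.head_cons, Matrix.cons_val_two,
        Matrix.tail_cons]
      linear_combination (pd 2 (fun y => u s y 0) (g s x)
        - pd 0 (fun y => u s y 2) (g s x)) * hdiv'
    · have hc := curl_comp_deriv u p g hu hp heuler hflow x 0 1 s
      have hfun : (fun τ => Y τ 2)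
          = fun τ => pd 0 (fun y => u τ y 1) (g τ x) - pd 1 (fun y => u τ y 0) (g τ x) := by
        funext τ; simp [hYdef, vcurl]
      show HasDerivAt (fun τ => Y τ 2) ((A s *ᵥ Y s) 2) s
      rw [hfun]
      convert hc using 1
      simp only [hYdef, hAdef, Matrix.mulVec, dotProduct, vcurl, Fin.sum_univ_three,
        Matrix.cons_val_zero, Matrix.cons_val_one, Matrix.head_cons, Matrix.cons_val_two,
        Matrix.tail_cons]
      linear_combination (pd 0 (fun y => u s y 1) (g s x)
        - pd 1 (fun y => u s y 0) (g s x)) * hdiv'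
  -- derivative of Z
  have hZ : ∀ s, HasDerivAt Z ((A s).mulVec (Z s)) s := by
    intro s
    rw [hasDerivAt_pi]
    intro i
    have hterm : ∀ k ∈ (Finset.univ : Finset (Fin 3)),
        HasDerivAt (fun τ => pd k (fun y => g τ y i) x * (vcurl (u 0) x k))
          ((∑ m, pd m (fun y => u s y i) (g s x) * pd k (fun y => g s y m) x)
            * vcurl (u 0) x k) s :=
      fun k _ => (flow_jac_deriv u g hu hg hflow x i k s).mul_const _
    have hsum := HasDerivAt.fun_sum hterm
    have hfun : (fun τ => Z τ i)
        = fun τ => ∑ k, pd k (fun y => g τ y i) x * (vcurl (u 0) x k) := by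
      funext τ
      simp [hZdef, Matrix.mulVec, dotProduct, jac]
    rw [hfun]
    convert hsum using 1
    simp only [hZdef, hAdef, Matrix.mulVec, dotProduct, jac, Fin.sum_univ_three]
    ring
  -- initial condition
  have hinit : Y 0 = Z 0 := by
    have hjac1 : jac (g 0) x = 1 := by
      funext i j
      have hid : (fun y : V3 => g 0 y i) = fun y : V3 => y i := by
        funext y; rw [hg0 y]
      have hproj : pd j (fun y : V3 => y i) x = (Pi.single j (1:ℝ) : V3) i := by
        have h1 : fderiv ℝ (fun y : V3 => y i) x
            = ContinuousLinearMap.proj (R := ℝ) (φ := fun _ : Fin 3 => ℝ) i :=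
          (ContinuousLinearMap.proj (R := ℝ) (φ := fun _ : Fin 3 => ℝ) i).hasFDerivAt.fderiv
        rw [pd, h1]
        rfl
      simp only [jac, hid, hproj, Pi.single_apply, Matrix.one_apply]
    simp only [hYdef, hZdef, hjac1, Matrix.one_mulVec, hg0 x]
  -- uniqueness of linear ODE solutions
  set a : ℝ := -(|t| + 1) with hadef
  set b : ℝ := |t| + 1 with hbdef
  have hab : a ≤ b := by
    simp only [hadef, hbdef]
    have : (0:ℝ) ≤ |t| + 1 := by positivity
    linarith
  set β : ℝ → ℝ := fun τ => ∑ i, ∑ k, |A τ i k| with hβdef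
  have hβc : Continuous β := by
    apply continuous_finset_sum
    intro i _
    apply continuous_finset_sum
    intro k _
    exact (pdu_cont u g hu hg x i k).abs
  obtain ⟨τ0, hτ0mem, hτ0⟩ := isCompact_Icc.exists_isMaxOn (Set.nonempty_Icc.mpr hab)
    hβc.continuousOn
  set K : NNReal := Real.toNNReal (β τ0) with hKdef
  set vf : ℝ → V3 → V3 := fun τ w => (A ((Set.projIcc a b hab τ) : ℝ)).mulVec w with hvfdef
  have hv : ∀ τ, LipschitzOnWith K (vf τ) Set.univ := by
    intro τ
    refine LipschitzOnWith.of_dist_le_mul fun w _ w' _ => ?_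
    rw [dist_eq_norm, dist_eq_norm, hvfdef]
    simp only
    rw [← Matrix.mulVec_sub]
    calc ‖(A ((Set.projIcc a b hab τ) : ℝ)).mulVec (w - w')‖
        ≤ β ((Set.projIcc a b hab τ) : ℝ) * ‖w - w'‖ := mulVec_norm_le _ _
      _ ≤ (K : ℝ) * ‖w - w'‖ := by
          refine mul_le_mul_of_nonneg_right ?_ (norm_nonneg _)
          refine le_trans (hτ0 (Set.projIcc a b hab τ).2) ?_
          rw [hKdef, Real.coe_toNNReal']
          exact le_max_left _ _
  have h0mem : (0:ℝ) ∈ Set.Ioo a b :=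
    ⟨by rw [hadef]; linarith [abs_nonneg t], by rw [hbdef]; linarith [abs_nonneg t]⟩
  have hprojmem : ∀ τ ∈ Set.Ioo a b, ((Set.projIcc a b hab τ) : ℝ) = τ := fun τ hτ =>
    congrArg Subtype.val (Set.projIcc_of_mem hab (Set.Ioo_subset_Icc_self hτ))
  have hYd : ∀ τ ∈ Set.Ioo a b, HasDerivAt Y (vf τ (Y τ)) τ := by
    intro τ hτ
    have heq : vf τ (Y τ) = (A τ).mulVec (Y τ) := by
      show (A ((Set.projIcc a b hab τ) : ℝ)).mulVec (Y τ) = (A τ).mulVec (Y τ)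
      rw [hprojmem τ hτ]
    rw [heq]; exact hY τ
  have hZd : ∀ τ ∈ Set.Ioo a b, HasDerivAt Z (vf τ (Z τ)) τ := by
    intro τ hτ
    have heq : vf τ (Z τ) = (A τ).mulVec (Z τ) := by
      show (A ((Set.projIcc a b hab τ) : ℝ)).mulVec (Z τ) = (A τ).mulVec (Z τ)
      rw [hprojmem τ hτ]
    rw [heq]; exact hZ τ
  have hYc : Continuous Y := continuous_iff_continuousAt.mpr fun τ => (hY τ).continuousAt
  have hZc : Continuous Z := continuous_iff_continuousAt.mpr fun τ => (hZ τ).continuousAt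
  have huniq := ODE_solution_unique_of_mem_Icc (v := vf) (s := fun _ => Set.univ) (fun τ _ => hv τ) h0mem
    hYc.continuousOn hYd (fun τ _ => Set.mem_univ _)
    hZc.continuousOn hZd (fun τ _ => Set.mem_univ _) hinit
  exact huniq ⟨by rw [hadef]; linarith [neg_abs_le t], by rw [hbdef]; linarith [le_abs_self t]⟩
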